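/- arXiv:2509.19797 — 3 statements merged into one kernel-verified Lean document; each statement's English description precedes it below -/
import Mathlib

section
/- Let φ(z) = 1/(1 + (1−z)^{1/2}), χ(z) = exp(−1/(1−z)^{1/2}) (principal branches), and ψ = φ + cχ with c ∈ (0,1] small enough that ψ maps 𝔻 to 𝔻. For ε > 0 set z_j = 1 − e^{−jε}, w_j^{(1)} = φ(z_j), w_j^{(2)} = ψ(z_j), and j₀(ε) = |log ε|/(2ε). Then there exists ε₀ > 0 such that for all ε ∈ (0,ε₀) and all integers j ≥ j₀(ε), 1 − |w_j^{(2)}| ≥ e^{−ε/8}(1 − |w_j^{(1)}|). -/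
open Complex MeasureTheory Metric Set Filter Asymptotics

noncomputable section

/-- The open unit disc in `ℂ`. -/
def uDisc : Set ℂ := Metric.ball 0 1

/-- `φ` is a holomorphic self-map of the unit disc. -/
def HolSelfMap (φ : ℂ → ℂ) : Prop :=
  DifferentiableOn ℂ φ uDisc ∧ MapsTo φ uDisc uDisc

/-- The set of mean-square integrals of `f` over circles of radius `r < 1`. -/
def hardyMeans (f : ℂ → ℂ) : Set ℝ :=
  {x | ∃ r : ℝ, 0 < r ∧ r < 1 ∧
    x = (1 / (2 * Real.pi)) * ∫ θ in (0:ℝ)..(2 * Real.pi),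
      ‖f ((r : ℂ) * Complex.exp ((θ : ℂ) * Complex.I))‖ ^ 2}

/-- Membership in the Hardy space `H²(𝔻)`. -/
def MemHardy2 (f : ℂ → ℂ) : Prop :=
  DifferentiableOn ℂ f uDisc ∧ BddAbove (hardyMeans f)

/-- The `H²` norm of `f`. -/
def hardyNorm (f : ℂ → ℂ) : ℝ := Real.sqrt (sSup (hardyMeans f))

/-- The operator norm, with respect to the Hardy norm, of a linear map on functions. -/
def opNorm (T : (ℂ → ℂ) →ₗ[ℂ] (ℂ → ℂ)) : ℝ :=
  sInf {M | 0 ≤ M ∧ ∀ f, MemHardy2 f → hardyNorm (T f) ≤ M * hardyNorm f}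

/-- `T` is a bounded operator on `H²(𝔻)`. -/
def IsBoundedOp (T : (ℂ → ℂ) →ₗ[ℂ] (ℂ → ℂ)) : Prop :=
  (∀ f, MemHardy2 f → MemHardy2 (T f)) ∧
  ∃ M : ℝ, ∀ f, MemHardy2 f → hardyNorm (T f) ≤ M * hardyNorm f

/-- The `n`-th approximation number of `T` as an operator on `H²(𝔻)`:
the infimum of `‖T - R‖` over bounded operators `R` of rank `< n`. -/
def approxN (n : ℕ) (T : (ℂ → ℂ) →ₗ[ℂ] (ℂ → ℂ)) : ℝ :=
  sInf {x | ∃ R : (ℂ → ℂ) →ₗ[ℂ] (ℂ → ℂ),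
    Module.rank ℂ ↥(LinearMap.range R) < (n : Cardinal) ∧ IsBoundedOp R ∧ x = opNorm (T - R)}

/-- The composition operator `C_φ : f ↦ f ∘ φ`. -/
def compOp (φ : ℂ → ℂ) : (ℂ → ℂ) →ₗ[ℂ] (ℂ → ℂ) where
  toFun f := fun z => f (φ z)
  map_add' _ _ := rfl
  map_smul' _ _ := rfl

/-- The weighted composition operator `M_ω C_φ : f ↦ ω · (f ∘ φ)`. -/
def wCompOp (ω φ : ℂ → ℂ) : (ℂ → ℂ) →ₗ[ℂ] (ℂ → ℂ) where
  toFun f := fun z => ω z * f (φ z)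
  map_add' f g := by funext z; simp [mul_add]
  map_smul' c f := by funext z; simp [smul_eq_mul]; ring

/-- The reproducing kernel of `H²(𝔻)` at `w`. -/
def repK (w : ℂ) : ℂ → ℂ := fun z => 1 / (1 - (starRingEnd ℂ) w * z)

/-- The pseudohyperbolic distance. -/
def pdist (z w : ℂ) : ℝ := ‖z - w‖ / ‖1 - (starRingEnd ℂ) z * w‖

/-- The uniform separation constant `δ(W)` of a (finite) set `W ⊆ 𝔻`. -/
def sepConst (W : Set ℂ) : ℝ :=
  sInf {x | ∃ z ∈ W, x = ∏ᶠ w ∈ W \ {z}, pdist z w}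

/-- The Carleson square `Q(θ₀, δ)` inside the closed unit disc. -/
def carlesonSquare (θ₀ δ : ℝ) : Set ℂ :=
  {z | ∃ r θ : ℝ, 1 - δ ≤ r ∧ r ≤ 1 ∧ |θ - θ₀| ≤ δ ∧
    z = (r : ℂ) * Complex.exp ((θ : ℂ) * Complex.I)}

/-- The Carleson norm of the measure `ν_Z = ∑_{z ∈ Z} (1-|z|²) δ_z`. -/
def nuCarleson (Z : Set ℂ) : ℝ :=
  sInf {C | 0 ≤ C ∧ ∀ θ₀ δ : ℝ, 0 < δ →
    (∑ᶠ z ∈ Z ∩ carlesonSquare θ₀ δ, (1 - ‖z‖ ^ 2)) ≤ C * δ}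

/-- `W` is an interpolating sequence for `H²(𝔻)` with interpolation constant at most `C`. -/
def InterpolatesWith (W : Set ℂ) (C : ℝ) : Prop :=
  ∀ a : ℂ → ℂ, Summable (fun w : W => ‖a w‖ ^ 2 * (1 - ‖(w : ℂ)‖ ^ 2)) →
    ∃ f, MemHardy2 f ∧ (∀ w ∈ W, f w = a w) ∧
      hardyNorm f ≤ C * Real.sqrt (∑' w : W, ‖a w‖ ^ 2 * (1 - ‖(w : ℂ)‖ ^ 2))

/-- The interpolation constant `M(W)`. -/
def interpConst (W : Set ℂ) : ℝ := sInf {C | 0 ≤ C ∧ InterpolatesWith W C}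

/-- The radial limit of `f` at a boundary point `z`. -/
def radialLimit (f : ℂ → ℂ) (z : ℂ) : ℂ :=
  limUnder (nhdsWithin (1:ℝ) (Set.Iio 1)) (fun r : ℝ => f ((r : ℂ) * z))

/-- The point `e^{iθ}` of the unit circle. -/
def circPt (θ : ℝ) : ℂ := Complex.exp ((θ : ℂ) * Complex.I)

/-- `B` is a Blaschke product of degree `m`. -/
def IsBlaschkeDeg (B : ℂ → ℂ) (m : ℕ) : Prop :=
  ∃ (γ : ℝ) (a : Fin m → ℂ), (∀ k, a k ∈ uDisc) ∧
    ∀ z, B z = Complex.exp ((γ : ℂ) * Complex.I) *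
      ∏ k, (z - a k) / (1 - (starRingEnd ℂ) (a k) * z)

/-- `φ` belongs to `C²({1})` with first- and second-order data `a`, `b` at `1`. -/
def MemC2One (φ : ℂ → ℂ) (a b : ℂ) : Prop :=
  (fun z => φ z - φ 1 - a * (z - 1) - b * (z - 1) ^ 2)
    =o[nhdsWithin (1:ℂ) (Metric.closedBall 0 1)] (fun z => (z - 1) ^ 2)

/-- Membership in `H^∞(𝔻)`. -/
def MemHinf (ω : ℂ → ℂ) : Prop :=
  DifferentiableOn ℂ ω uDisc ∧ ∃ M : ℝ, ∀ z ∈ uDisc, ‖ω z‖ ≤ M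

/-- The `H^∞` (sup) norm over the unit disc. -/
def hinfNorm (ω : ℂ → ℂ) : ℝ := sSup {x | ∃ z ∈ uDisc, x = ‖ω z‖}

/-- Essential supremum of `F` over the set `S ⊆ ℝ` (w.r.t. Lebesgue measure). -/
def bSup (S : Set ℝ) (F : ℝ → ℝ) : ℝ := essSup F (volume.restrict S)

/-- The map `φ(z) = 1/(1 + (1-z)^{1/2})` (principal branch). -/
def phiCorner : ℂ → ℂ := fun z => 1 / (1 + (1 - z) ^ ((1:ℂ)/2))

/-- The map `χ(z) = exp(-1/(1-z)^{1/2})` (principal branch). -/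
def chiCorner : ℂ → ℂ := fun z => Complex.exp (-(1 / (1 - z) ^ ((1:ℂ)/2)))

/-- The perturbation `ψ = φ + cχ`. -/
def psiCorner (c : ℝ) : ℂ → ℂ := fun z => phiCorner z + (c : ℂ) * chiCorner z

/-- The points `z_j = 1 - e^{-jε}`. -/
def zpt (ε : ℝ) (j : ℕ) : ℂ := 1 - (Real.exp (-(j : ℝ) * ε) : ℝ)

/-- The points `w_j^{(1)} = φ(z_j)` (for `u = 0`) and `w_j^{(2)} = ψ(z_j)` (for `u = 1`). -/
def wpt (c : ℝ) (ε : ℝ) (j : ℕ) (u : Fin 2) : ℂ :=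
  if u = 0 then phiCorner (zpt ε j) else psiCorner c (zpt ε j)

/-- `j₀(ε) = |log ε|/(2ε)`. -/
def j0 (ε : ℝ) : ℝ := |Real.log ε| / (2 * ε)

end

noncomputable section

lemma key_real (ε t c : ℝ) (hε : 0 < ε) (hε' : ε < Real.exp (-100))
    (hc : 0 < c) (hc1 : c ≤ 1) (ht : -Real.log ε / 4 ≤ t) :
    1 - (1/(1 + Real.exp (-t)) + c * Real.exp (-(1/Real.exp (-t)))) ≥
      Real.exp (-ε/8) * (1 - 1/(1 + Real.exp (-t))) := by
  set L : ℝ := -Real.log ε with hL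
  have hL100 : 100 < L := by
    have h := Real.log_lt_log hε hε'
    rw [Real.log_exp] at h; simp only [hL]; linarith
  have ht25 : 25 < t := by linarith
  set r : ℝ := Real.exp (-t) with hr
  have hrpos : 0 < r := Real.exp_pos _
  have hr1 : r ≤ 1 := Real.exp_le_one_iff.mpr (by linarith)
  have h1r : 1/r = Real.exp t := by rw [hr, one_div, ← Real.exp_neg, neg_neg]
  have hq : (1 + t/2)^2 ≤ Real.exp t := by
    have h2 : Real.exp (t/2) * Real.exp (t/2) = Real.exp t := by
      rw [← Real.exp_add]; ring_nf
    nlinarith [Real.add_one_le_exp (t/2)]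
  have hft : L + 5 ≤ Real.exp t - t := by nlinarith [sq_nonneg (t - L/4)]
  have h32 : (32:ℝ) ≤ Real.exp 5 := by
    have h2 : (2:ℝ) ≤ Real.exp 1 := by linarith [Real.add_one_le_exp 1]
    have h5 : Real.exp 1 ^ (5:ℕ) = Real.exp 5 := by
      rw [← Real.exp_nat_mul]; norm_num
    have := pow_le_pow_left₀ (by norm_num : (0:ℝ) ≤ 2) h2 5
    rw [h5] at this; norm_num at this; linarith
  have hX : Real.exp (-(1/r)) ≤ ε * r / 32 := by
    have e1 : Real.exp (-(1/r)) = Real.exp (t - Real.exp t) * r := by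
      rw [h1r, hr, ← Real.exp_add]; ring_nf
    have e2 : Real.exp (t - Real.exp t) ≤ Real.exp (-(L+5)) :=
      Real.exp_le_exp.mpr (by linarith)
    have e3 : Real.exp (-(L+5)) = ε * Real.exp (-5) := by
      rw [show -(L+5) = Real.log ε + (-5) by simp only [hL]; ring,
        Real.exp_add, Real.exp_log hε]
    have e4 : Real.exp (-5) ≤ 1/32 := by
      rw [Real.exp_neg, inv_eq_one_div]
      exact one_div_le_one_div_of_le (by norm_num) h32
    calc Real.exp (-(1/r)) = Real.exp (t - Real.exp t) * r := e1
      _ ≤ Real.exp (-(L+5)) * r := mul_le_mul_of_nonneg_right e2 hrpos.le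
      _ = ε * Real.exp (-5) * r := by rw [e3]
      _ ≤ ε * (1/32) * r := by
          have := mul_le_mul_of_nonneg_right (mul_le_mul_of_nonneg_left e4 hε.le) hrpos.le
          linarith
      _ = ε * r / 32 := by ring
  have hE : ε/16 ≤ 1 - Real.exp (-ε/8) := by
    have h1 : Real.exp (-ε/8) = 1 / Real.exp (ε/8) := by
      rw [one_div, ← Real.exp_neg]; ring_nf
    have h2 : 1 + ε/8 ≤ Real.exp (ε/8) := by linarith [Real.add_one_le_exp (ε/8)]
    have h3 : Real.exp (-ε/8) ≤ 1/(1 + ε/8) := by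
      rw [h1]; exact one_div_le_one_div_of_le (by positivity) h2
    have hε1 : ε < 1 := lt_trans hε' (by
      calc Real.exp (-100) < Real.exp 0 := Real.exp_lt_exp.mpr (by norm_num)
        _ = 1 := Real.exp_zero)
    have h4 : 1/(1 + ε/8) ≤ 1 - ε/16 := by
      rw [div_le_iff₀ (by positivity)]; nlinarith
    linarith
  have hA : 1 - 1/(1+r) = r/(1+r) := by field_simp; ring
  have hrr : r/2 ≤ r/(1+r) := by
    rw [div_le_div_iff₀ (by norm_num) (by positivity)]; nlinarith
  have hcX : c * Real.exp (-(1/r)) ≤ ε * r / 32 := by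
    nlinarith [Real.exp_pos (-(1/r))]
  have hmm : (ε/16) * (r/2) ≤ (1 - Real.exp (-ε/8)) * (r/(1+r)) :=
    mul_le_mul hE hrr (by positivity) (by linarith)
  nlinarith [hmm, hcX, hA]

lemma reduce_corner (ε : ℝ) (c : ℝ) (j : ℕ) :
    phiCorner (zpt ε j) = ((1/(1 + Real.exp (-((j:ℝ)*ε/2))) : ℝ) : ℂ) ∧
    psiCorner c (zpt ε j) = ((1/(1 + Real.exp (-((j:ℝ)*ε/2))) +
      c * Real.exp (-(1/Real.exp (-((j:ℝ)*ε/2)))) : ℝ) : ℂ) := by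
  set s : ℝ := Real.exp (-(j:ℝ) * ε) with hs
  set r : ℝ := Real.exp (-((j:ℝ)*ε/2)) with hrdef
  have hspos : 0 < s := Real.exp_pos _
  have hz : (1:ℂ) - zpt ε j = (s : ℂ) := by simp only [zpt, hs]; ring
  have hr : s ^ ((1:ℝ)/2) = r := by
    rw [Real.rpow_def_of_pos hspos, hs, Real.log_exp, hrdef]; ring_nf
  have hpow : ((1:ℂ) - zpt ε j) ^ ((1:ℂ)/2) = (r : ℂ) := by
    rw [hz, show ((1:ℂ)/2) = (((1:ℝ)/2 : ℝ) : ℂ) by norm_num,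
      ← Complex.ofReal_cpow hspos.le, hr]
  constructor
  · rw [phiCorner, hpow]; push_cast; ring
  · rw [psiCorner, phiCorner, chiCorner, hpow]
    rw [show -(1 / (r:ℂ)) = (((-(1/r) : ℝ)) : ℂ) by push_cast; ring,
      ← Complex.ofReal_exp]
    push_cast; ring

/-- For `j ≥ j₀(ε) = |log ε|/(2ε)` one has
`1 - |w_j^{(2)}| ≥ e^{-ε/8}(1 - |w_j^{(1)}|)`. -/
theorem stmt_7 (c : ℝ) (hc : c ∈ Set.Ioc (0:ℝ) 1)
    (hself : MapsTo (psiCorner c) uDisc uDisc) :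
    ∃ ε₀ : ℝ, 0 < ε₀ ∧ ∀ ε ∈ Set.Ioo (0:ℝ) ε₀, ∀ j : ℕ, j0 ε ≤ j →
      1 - ‖psiCorner c (zpt ε j)‖ ≥
        Real.exp (-ε / 8) * (1 - ‖phiCorner (zpt ε j)‖) := by
  refine ⟨Real.exp (-100), Real.exp_pos _, fun ε hε j hj => ?_⟩
  obtain ⟨hεpos, hεlt⟩ := hε
  have hε1 : ε < 1 := lt_trans hεlt (by
    calc Real.exp (-100) < Real.exp 0 := Real.exp_lt_exp.mpr (by norm_num)
      _ = 1 := Real.exp_zero)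
  have hlogneg : Real.log ε < 0 := Real.log_neg hεpos hε1
  have ht : -Real.log ε / 4 ≤ (j:ℝ) * ε / 2 := by
    have hj' : |Real.log ε| / (2 * ε) ≤ (j:ℝ) := hj
    rw [abs_of_neg hlogneg, div_le_iff₀ (by positivity)] at hj'
    nlinarith
  have hkey := key_real ε ((j:ℝ)*ε/2) c hεpos hεlt hc.1 hc.2 ht
  obtain ⟨h1, h2⟩ := reduce_corner ε c j
  set r : ℝ := Real.exp (-((j:ℝ)*ε/2)) with hrdef
  have hrpos : 0 < r := Real.exp_pos _
  have habs1 : ‖phiCorner (zpt ε j)‖ = 1/(1+r) := by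
    rw [h1, Complex.norm_real, Real.norm_eq_abs, _root_.abs_of_nonneg (by positivity)]
  have habs2 : ‖psiCorner c (zpt ε j)‖ =
      1/(1+r) + c * Real.exp (-(1/r)) := by
    have hp1 : 0 < 1/(1+r) := by positivity
    have hp2 : 0 < c * Real.exp (-(1/r)) := mul_pos hc.1 (Real.exp_pos _)
    rw [h2, Complex.norm_real, Real.norm_eq_abs, _root_.abs_of_nonneg (by linarith)]
  rw [habs1, habs2]
  exact hkey


end
end

section
/- Let φ(z) = 1/(1 + (1−z)^{1/2}), χ(z) = exp(−1/(1−z)^{1/2}) (principal branches), and ψ = φ + cχ with c ∈ (0,1] small enough that ψ maps 𝔻 to 𝔻. For ε > 0 set z_j = 1 − e^{−jε}, w_j^{(1)} = φ(z_j), w_j^{(2)} = ψ(z_j), and j₀(ε) = |log ε|/(2ε). Then there exists ε₀ > 0 such that for all ε ∈ (0,ε₀), all integers j ≥ j₀(ε) and all u, v ∈ {1,2}, (1 − |w_{j+1}^{(u)}|)/(1 − |w_j^{(v)}|) ≤ e^{−ε/8}. -/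
open Complex MeasureTheory Metric Set Filter Asymptotics

noncomputable section Stmt8Aux

namespace Stmt8Aux

/-- `ε₀` for statement 8. -/
def eps0 : ℝ := ((1492992:ℝ)⁻¹) ^ 4

lemma eps0_pos : 0 < eps0 := by norm_num [eps0]

lemma eps0_lt_one : eps0 < 1 := by norm_num [eps0]

lemma t_le_a {t ε : ℝ} (ht : 0 < t) (ht4 : t ^ 4 ≤ ε) (hε : ε ≤ eps0) :
    t ≤ (1492992:ℝ)⁻¹ := by
  by_contra h
  push_neg at h
  have h2 : ((1492992:ℝ)⁻¹) ^ 4 < t ^ 4 := by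
    apply pow_lt_pow_left₀ h (by norm_num)
    norm_num
  simp only [eps0] at hε
  linarith

lemma exp_bound {t : ℝ} (ht : 0 < t) : Real.exp (-t⁻¹) ≤ 46656 * t ^ 6 := by
  have h1 : 1 / (6 * t) ≤ Real.exp (1 / (6 * t)) := by
    linarith [Real.add_one_le_exp (1 / (6 * t))]
  have h2 : (1 / (6 * t)) ^ 6 ≤ Real.exp (1 / (6 * t)) ^ 6 := by
    apply pow_le_pow_left₀ (by positivity) h1
  have h3 : Real.exp (1 / (6 * t)) ^ 6 = Real.exp (t⁻¹) := by
    rw [← Real.exp_nat_mul]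
    congr 1
    field_simp
    norm_num
  rw [h3] at h2
  have h4 : Real.exp (-t⁻¹) = (Real.exp t⁻¹)⁻¹ := Real.exp_neg _
  have h5 : ((1 / (6 * t)) ^ 6)⁻¹ = 46656 * t ^ 6 := by
    rw [one_div, ← inv_pow, inv_inv]
    ring
  rw [h4, ← h5]
  apply inv_anti₀ (by positivity) h2

/-- Core real inequality. -/
lemma core {ε t c : ℝ} (hε : 0 < ε) (hεle : ε ≤ eps0) (ht : 0 < t)
    (ht4 : t ^ 4 ≤ ε) (hc0 : 0 ≤ c) (hc1 : c ≤ 1) :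
    0 < t / (1 + t) - c * Real.exp (-t⁻¹) ∧
    (t * Real.exp (-ε/2)) / (1 + t * Real.exp (-ε/2)) ≤
      Real.exp (-ε/8) * (t / (1 + t) - c * Real.exp (-t⁻¹)) := by
  have ha : t ≤ (1492992:ℝ)⁻¹ := t_le_a ht ht4 hεle
  have hε1 : ε ≤ 1 := hεle.trans (by norm_num [eps0])
  have hEt : Real.exp (-t⁻¹) ≤ t * ε / 32 := by
    have h6 : t ^ 6 ≤ ε * ((1492992:ℝ)⁻¹ * t) := by
      nlinarith [mul_nonneg (sub_nonneg.2 ht4) (sq_nonneg t),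
        mul_nonneg (sub_nonneg.2 ha) (mul_nonneg hε.le ht.le)]
    calc Real.exp (-t⁻¹) ≤ 46656 * t ^ 6 := exp_bound ht
      _ ≤ 46656 * (ε * ((1492992:ℝ)⁻¹ * t)) := by linarith
      _ = t * ε / 32 := by ring
  have hcEt : c * Real.exp (-t⁻¹) ≤ t * ε / 32 := by
    have := Real.exp_pos (-t⁻¹)
    nlinarith
  have ht1 : t ≤ 1 := ha.trans (by norm_num)
  have h1t : (0:ℝ) < 1 + t := by linarith
  have hB : 0 < t / (1 + t) := div_pos ht h1t
  -- denominator lower bound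
  have hD : t / (1 + t) * (1 - ε/16) ≤ t / (1 + t) - c * Real.exp (-t⁻¹) := by
    have h32 : t * ε / 32 ≤ t / (1 + t) * (ε / 16) := by
      rw [div_mul_eq_mul_div, div_le_div_iff₀ (by norm_num) h1t]
      nlinarith [mul_nonneg (mul_nonneg ht.le hε.le) (sub_nonneg.2 ht1)]
    have : t / (1 + t) * (1 - ε/16) = t / (1 + t) - t / (1 + t) * (ε/16) := by ring
    rw [this]
    linarith
  have hDpos : 0 < t / (1 + t) - c * Real.exp (-t⁻¹) := by
    have : 0 < t / (1 + t) * (1 - ε/16) := by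
      apply mul_pos hB; linarith
    linarith
  refine ⟨hDpos, ?_⟩
  set s := Real.exp (-ε/2) with hs_def
  have hs : 0 < s := Real.exp_pos _
  have hs1 : 1 - s ≤ ε / 2 := by
    have := Real.add_one_le_exp (-ε/2)
    simp only [hs_def]
    linarith
  -- numerator upper bound
  have hN : t * s / (1 + t * s) ≤ t / (1 + t) * (s * (1 + ε/8)) := by
    have hts : (0:ℝ) < 1 + t * s := by positivity
    rw [div_mul_eq_mul_div, div_le_div_iff₀ hts h1t]
    have hta : t - t * s ≤ ε / 8 := by nlinarith
    have hbr : 0 ≤ ε/8 + t * s * (1 + ε/8) - t := by nlinarith [mul_nonneg (mul_nonneg ht.le hs.le) hε.le]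
    nlinarith [mul_nonneg (mul_nonneg ht.le hs.le) hbr]
  -- exponential inequality
  have h14 : (1:ℝ) + ε/4 ≤ Real.exp (ε/4) := by linarith [Real.add_one_le_exp (ε/4)]
  have hE4 : Real.exp (-ε/4) * (1 + ε/4) ≤ 1 := by
    have h := mul_le_mul_of_nonneg_left h14 (Real.exp_pos (-ε/4)).le
    rwa [← Real.exp_add, (by ring : -ε/4 + ε/4 = 0), Real.exp_zero] at h
  have he2 : Real.exp (-ε/4) ≤ 1 - ε/16 := by
    nlinarith [Real.exp_pos (-ε/4)]
  have hfin : s * (1 + ε/8) ≤ Real.exp (-ε/8) * (1 - ε/16) := by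
    have h18 : (1:ℝ) + ε/8 ≤ Real.exp (ε/8) := by linarith [Real.add_one_le_exp (ε/8)]
    have step1 : s * (1 + ε/8) ≤ Real.exp (-ε * (3/8)) := by
      calc s * (1 + ε/8) ≤ s * Real.exp (ε/8) := by nlinarith
        _ = Real.exp (-ε * (3/8)) := by
            rw [hs_def, ← Real.exp_add]; congr 1; ring
    have step2 : Real.exp (-ε * (3/8)) = Real.exp (-ε/8) * Real.exp (-ε/4) := by
      rw [← Real.exp_add]; congr 1; ring
    calc s * (1 + ε/8) ≤ Real.exp (-ε/8) * Real.exp (-ε/4) := by rw [← step2]; exact step1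
      _ ≤ Real.exp (-ε/8) * (1 - ε/16) :=
          mul_le_mul_of_nonneg_left he2 (Real.exp_pos _).le
  calc t * s / (1 + t * s) ≤ t / (1 + t) * (s * (1 + ε/8)) := hN
    _ ≤ t / (1 + t) * (Real.exp (-ε/8) * (1 - ε/16)) :=
        mul_le_mul_of_nonneg_left hfin hB.le
    _ = Real.exp (-ε/8) * (t / (1 + t) * (1 - ε/16)) := by ring
    _ ≤ Real.exp (-ε/8) * (t / (1 + t) - c * Real.exp (-t⁻¹)) :=
        mul_le_mul_of_nonneg_left hD (Real.exp_pos _).le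

lemma sqrt_exp (x : ℝ) :
    ((Real.exp x : ℝ) : ℂ) ^ ((1:ℂ)/2) = ((Real.exp (x/2) : ℝ) : ℂ) := by
  have h : ((1:ℂ)/2) = (((1:ℝ)/2 : ℝ) : ℂ) := by norm_num
  rw [h, ← Complex.ofReal_cpow (Real.exp_nonneg x)]
  congr 1
  rw [Real.rpow_def_of_pos (Real.exp_pos x), Real.log_exp]
  congr 1
  ring

lemma one_sub_zpt (ε : ℝ) (j : ℕ) :
    (1:ℂ) - zpt ε j = ((Real.exp (-(j:ℝ) * ε) : ℝ) : ℂ) := by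
  simp [zpt]

lemma phi_zpt (ε : ℝ) (j : ℕ) :
    phiCorner (zpt ε j) = (((1 + Real.exp (-(j:ℝ) * ε / 2))⁻¹ : ℝ) : ℂ) := by
  have h1t : (0:ℝ) < 1 + Real.exp (-(j:ℝ) * ε / 2) := by positivity
  simp only [phiCorner, one_sub_zpt, sqrt_exp]
  rw [Complex.ofReal_inv]
  push_cast
  rw [one_div]

lemma chi_zpt (ε : ℝ) (j : ℕ) :
    chiCorner (zpt ε j) =
      ((Real.exp (-(Real.exp (-(j:ℝ) * ε / 2))⁻¹) : ℝ) : ℂ) := by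
  simp only [chiCorner, one_sub_zpt, sqrt_exp]
  rw [Complex.ofReal_exp]
  congr 1
  push_cast
  ring

lemma psi_zpt (c ε : ℝ) (j : ℕ) :
    psiCorner c (zpt ε j) =
      (((1 + Real.exp (-(j:ℝ) * ε / 2))⁻¹
        + c * Real.exp (-(Real.exp (-(j:ℝ) * ε / 2))⁻¹) : ℝ) : ℂ) := by
  simp only [psiCorner, phi_zpt, chi_zpt]
  push_cast
  ring

lemma zpt_mem (ε : ℝ) (hε : 0 < ε) (k : ℕ) : zpt ε k ∈ uDisc := by
  have h1 : Real.exp (-(k:ℝ) * ε) ≤ 1 := by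
    rw [Real.exp_le_one_iff]
    have : (0:ℝ) ≤ (k:ℝ) * ε := by positivity
    linarith
  have h2 : 0 < Real.exp (-(k:ℝ) * ε) := Real.exp_pos _
  have hz : zpt ε k = ((1 - Real.exp (-(k:ℝ) * ε) : ℝ) : ℂ) := by
    simp [zpt]
  rw [uDisc, Metric.mem_ball, dist_zero_right, hz, Complex.norm_real]
  rw [Real.norm_eq_abs, abs_lt]
  constructor <;> linarith

end Stmt8Aux

end Stmt8Aux

noncomputable section

/-- For `j ≥ j₀(ε)` and `u, v ∈ {1,2}` one has
`(1-|w_{j+1}^{(u)}|)/(1-|w_j^{(v)}|) ≤ e^{-ε/8}`. -/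
theorem stmt_8 (c : ℝ) (hc : c ∈ Set.Ioc (0:ℝ) 1)
    (hself : MapsTo (psiCorner c) uDisc uDisc) :
    ∃ ε₀ : ℝ, 0 < ε₀ ∧ ∀ ε ∈ Set.Ioo (0:ℝ) ε₀, ∀ j : ℕ, j0 ε ≤ j → ∀ u v : Fin 2,
      (1 - ‖wpt c ε (j + 1) u‖) / (1 - ‖wpt c ε j v‖) ≤
        Real.exp (-ε / 8) := by
  classical
  refine ⟨Stmt8Aux.eps0, Stmt8Aux.eps0_pos, ?_⟩
  rintro ε ⟨hε0, hεlt⟩ j hj u v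
  obtain ⟨hc0, hc1⟩ := hc
  set t : ℝ := Real.exp (-(j:ℝ) * ε / 2) with ht_def
  set s : ℝ := Real.exp (-ε/2) with hs_def
  have ht : 0 < t := Real.exp_pos _
  have hs : 0 < s := Real.exp_pos _
  have hεle : ε ≤ Stmt8Aux.eps0 := hεlt.le
  have hε1 : ε < 1 := lt_of_lt_of_le hεlt Stmt8Aux.eps0_lt_one.le
  -- t^4 ≤ ε
  have ht4 : t ^ 4 ≤ ε := by
    have hlog : Real.log ε < 0 := Real.log_neg hε0 hε1
    have habs : |Real.log ε| = -Real.log ε := abs_of_neg hlog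
    have hj' : |Real.log ε| ≤ 2 * ε * (j:ℝ) := by
      have := hj
      rw [j0, div_le_iff₀ (by positivity)] at this
      linarith [this]
    have harg : 4 * (-(j:ℝ) * ε / 2) ≤ Real.log ε := by
      rw [habs] at hj'
      linarith
    calc t ^ 4 = Real.exp (4 * (-(j:ℝ) * ε / 2)) := by
          rw [ht_def, ← Real.exp_nat_mul]; norm_num
      _ ≤ Real.exp (Real.log ε) := Real.exp_le_exp.2 harg
      _ = ε := Real.exp_log hε0
  -- t for index j+1
  have ht' : Real.exp (-((j:ℕ)+1 : ℝ) * ε / 2) = t * s := by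
    rw [ht_def, hs_def, ← Real.exp_add]
    congr 1
    ring
  obtain ⟨hDpos, hcore⟩ := Stmt8Aux.core hε0 hεle ht ht4 hc0.le hc1
  set E : ℝ := Real.exp (-t⁻¹) with hE_def
  have hE : 0 < E := Real.exp_pos _
  set E' : ℝ := Real.exp (-(t*s)⁻¹) with hE'_def
  have hE' : 0 < E' := Real.exp_pos _
  have h1t : (0:ℝ) < 1 + t := by positivity
  have h1ts : (0:ℝ) < 1 + t * s := by positivity
  -- values at index j
  have hzj := Stmt8Aux.zpt_mem ε hε0 j
  have hpsij := hself hzj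
  have hpsij_val : psiCorner c (zpt ε j) = (((1+t)⁻¹ + c * E : ℝ) : ℂ) := by
    rw [Stmt8Aux.psi_zpt]
  have hpsij_lt : (1+t)⁻¹ + c * E < 1 := by
    have h1 : ‖psiCorner c (zpt ε j)‖ < 1 := by
      have := hpsij
      rwa [uDisc, Metric.mem_ball, dist_zero_right] at this
    rw [hpsij_val, Complex.norm_real, Real.norm_eq_abs, abs_of_pos (by positivity)] at h1
    exact h1
  -- denominator lower bound: 1 - |w_j^v| ≥ t/(1+t) - cE
  have hinv : 1 - (1+t)⁻¹ = t / (1+t) := by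
    field_simp
    ring
  have hDen : ∀ v : Fin 2, t / (1+t) - c * E ≤ 1 - ‖wpt c ε j v‖ ∧
      0 < 1 - ‖wpt c ε j v‖ := by
    intro v
    fin_cases v
    · simp only [wpt]
      norm_num
      rw [Stmt8Aux.phi_zpt, Complex.norm_real, Real.norm_eq_abs, ← ht_def,
        abs_of_pos (by positivity), hinv]
      constructor
      · nlinarith
      · exact inv_lt_one_of_one_lt₀ (by linarith)
    · simp only [wpt]
      norm_num
      rw [hpsij_val, Complex.norm_real, Real.norm_eq_abs, abs_of_pos (by positivity)]
      constructor
      · linarith [hinv, mul_pos hc0 hE]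
      · linarith
  -- numerator upper bound: 1 - |w_{j+1}^u| ≤ ts/(1+ts)
  have hinv' : 1 - (1+t*s)⁻¹ = t*s / (1+t*s) := by
    field_simp
    ring
  have hNum : ∀ u : Fin 2,
      1 - ‖wpt c ε (j+1) u‖ ≤ t*s / (1+t*s) := by
    intro u
    fin_cases u
    · simp only [wpt]
      norm_num
      rw [Stmt8Aux.phi_zpt, Complex.norm_real, Real.norm_eq_abs]
      push_cast
      rw [ht', abs_of_pos (by positivity)]
      linarith [hinv']
    · simp only [wpt]
      norm_num
      rw [Stmt8Aux.psi_zpt]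
      rw [Complex.norm_real, Real.norm_eq_abs]
      push_cast
      rw [ht', abs_of_pos (by positivity)]
      have h0 : 0 ≤ c * Real.exp (-(t*s)⁻¹) := by positivity
      linarith [hinv', h0]
  obtain ⟨hD1, hD2⟩ := hDen v
  rw [div_le_iff₀ hD2]
  have hchain : 1 - ‖wpt c ε (j+1) u‖ ≤
      Real.exp (-ε/8) * (1 - ‖wpt c ε j v‖) := by
    calc 1 - ‖wpt c ε (j+1) u‖ ≤ t*s / (1+t*s) := hNum u
      _ ≤ Real.exp (-ε/8) * (t / (1+t) - c * E) := hcore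
      _ ≤ Real.exp (-ε/8) * (1 - ‖wpt c ε j v‖) :=
          mul_le_mul_of_nonneg_left hD1 (Real.exp_pos _).le
  exact hchain

end
end

section
/- Let φ(z) = 1/(1 + (1−z)^{1/2}), χ(z) = exp(−1/(1−z)^{1/2}) (principal branches), and ψ = φ + cχ with c ∈ (0,1] small enough that ψ maps 𝔻 to 𝔻. For ε > 0 set z_j = 1 − e^{−jε}, w_j^{(1)} = φ(z_j), w_j^{(2)} = ψ(z_j). Then for all ε > 0, all n ≥ 1, all 1 ≤ j ≤ n and all u ∈ {1,2}, (1 − |z_j|²)/(1 − |w_j^{(u)}|²) ≥ (1/2)·exp(−nε/2). -/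
open Complex MeasureTheory Metric Set Filter Asymptotics

noncomputable section

set_option maxHeartbeats 1000000 in
/-- For all `ε > 0`, `1 ≤ j ≤ n` and `u ∈ {1,2}`,
`(1-|z_j|²)/(1-|w_j^{(u)}|²) ≥ (1/2)·exp(-nε/2)`. -/
theorem stmt_10 (c : ℝ) (hc : c ∈ Set.Ioc (0:ℝ) 1)
    (hself : MapsTo (psiCorner c) uDisc uDisc)
    (ε : ℝ) (hε : 0 < ε) (n : ℕ) (hn : 1 ≤ n)
    (j : ℕ) (hj : 1 ≤ j) (hjn : j ≤ n) (u : Fin 2) :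
    (1 - ‖zpt ε j‖ ^ 2) / (1 - ‖wpt c ε j u‖ ^ 2) ≥
      (1 / 2) * Real.exp (-(n : ℝ) * ε / 2) := by
  set s : ℝ := Real.exp (-(j : ℝ) * ε / 2) with hs_def
  have hs0 : 0 < s := Real.exp_pos _
  have hj1 : (1 : ℝ) ≤ (j : ℝ) := by exact_mod_cast hj
  have hs1 : s < 1 := by
    rw [hs_def, ← Real.exp_zero]
    apply Real.exp_lt_exp.mpr
    nlinarith
  have hsq : Real.exp (-(j : ℝ) * ε) = s ^ 2 := by
    rw [hs_def, ← Real.exp_nat_mul]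
    congr 1
    push_cast
    ring
  have hz : zpt ε j = ((1 - s ^ 2 : ℝ) : ℂ) := by
    rw [zpt, hsq]; push_cast; ring
  have habsz : ‖zpt ε j‖ = 1 - s ^ 2 := by
    rw [hz, Complex.norm_real, Real.norm_eq_abs]
    exact abs_of_nonneg (by nlinarith)
  have hone : (1 : ℂ) - zpt ε j = ((s ^ 2 : ℝ) : ℂ) := by rw [hz]; push_cast; ring
  have hcpow : ((s ^ 2 : ℝ) : ℂ) ^ ((1 : ℂ) / 2) = (s : ℂ) := by
    have h2 : ((1 : ℂ) / 2) = (((1 : ℝ) / 2 : ℝ) : ℂ) := by norm_num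
    rw [h2, ← Complex.ofReal_cpow (by positivity)]
    congr 1
    rw [← Real.rpow_natCast s 2, ← Real.rpow_mul hs0.le]
    norm_num
  have hphi : phiCorner (zpt ε j) = ((1 / (1 + s) : ℝ) : ℂ) := by
    rw [phiCorner, hone, hcpow]
    push_cast
    ring
  have hchi : chiCorner (zpt ε j) = ((Real.exp (-(1 / s)) : ℝ) : ℂ) := by
    have hcast : ((-(1 / s) : ℝ) : ℂ) = -(1 / (s : ℂ)) := by push_cast; ring
    rw [chiCorner, hone, hcpow, ← hcast, Complex.ofReal_exp (-(1 / s))]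
  set a : ℝ := Real.exp (-(1 / s)) with ha_def
  have ha0 : 0 < a := Real.exp_pos _
  set W₀ : ℝ := 1 / (1 + s) with hW₀_def
  have hW₀0 : 0 < W₀ := by positivity
  have hW₀1 : W₀ < 1 := by
    rw [hW₀_def, div_lt_one (by linarith)]
    linarith
  have hW₀ge : 1 - s ≤ W₀ := by
    rw [hW₀_def, le_div_iff₀ (by linarith)]
    nlinarith
  have hpsi : psiCorner c (zpt ε j) = ((W₀ + c * a : ℝ) : ℂ) := by
    rw [psiCorner, hphi, hchi]
    push_cast
    ring
  have hmem : zpt ε j ∈ uDisc := by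
    simp only [uDisc, Metric.mem_ball, dist_zero_right, habsz]
    nlinarith
  have hψlt : W₀ + c * a < 1 := by
    have h := hself hmem
    simp only [uDisc, Metric.mem_ball, dist_zero_right, hpsi,
      Complex.norm_real, Real.norm_eq_abs] at h
    exact (abs_lt.mp h).2
  clear_value s a W₀
  have main : ∀ W : ℝ, W₀ ≤ W → W < 1 →
      (1 - (1 - s ^ 2) ^ 2) / (1 - W ^ 2) ≥ 1 / 2 * Real.exp (-(n : ℝ) * ε / 2) := by
    intro W hW1 hW2
    have hW0 : 0 < W := lt_of_lt_of_le hW₀0 hW1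
    have hD : 0 < 1 - W ^ 2 := by nlinarith
    have hDle : 1 - W ^ 2 ≤ 2 * s := by nlinarith
    have hN : s ^ 2 ≤ 1 - (1 - s ^ 2) ^ 2 := by
      nlinarith [mul_nonneg (sq_nonneg s) (by nlinarith : (0:ℝ) ≤ 1 - s ^ 2)]
    have hdiv : s ^ 2 / (2 * s) ≤ (1 - (1 - s ^ 2) ^ 2) / (1 - W ^ 2) :=
      div_le_div₀ (by nlinarith) hN hD hDle
    have hss : s ^ 2 / (2 * s) = s / 2 := by
      field_simp
    have hsn : Real.exp (-(n : ℝ) * ε / 2) ≤ s := by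
      rw [hs_def]
      apply Real.exp_le_exp.mpr
      have hjn' : (j : ℝ) ≤ (n : ℝ) := by exact_mod_cast hjn
      have hmul := mul_le_mul_of_nonneg_right hjn' hε.le
      linarith
    rw [hss] at hdiv
    linarith
  have hw0 : ‖wpt c ε j 0‖ = W₀ := by
    have : wpt c ε j 0 = ((W₀ : ℝ) : ℂ) := by
      rw [wpt, if_pos rfl, hphi]
    rw [this, Complex.norm_real, Real.norm_eq_abs]
    exact abs_of_pos hW₀0
  have hw1 : ‖wpt c ε j 1‖ = W₀ + c * a := by
    have h10 : (1 : Fin 2) ≠ 0 := by decide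
    have : wpt c ε j 1 = ((W₀ + c * a : ℝ) : ℂ) := by
      rw [wpt, if_neg h10, hpsi]
    rw [this, Complex.norm_real, Real.norm_eq_abs]
    exact abs_of_pos (by nlinarith [hc.1])
  rw [habsz]
  have hu : u = 0 ∨ u = 1 := by omega
  rcases hu with rfl | rfl
  · rw [hw0]
    exact main W₀ le_rfl hW₀1
  · rw [hw1]
    exact main (W₀ + c * a) (by nlinarith [hc.1]) hψlt

end
end
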